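/- For all integers M ≥ 0 and 1 ≤ n ≤ M+1: ∑_{x_1=1}^{M+1} ⋯ ∑_{x_n=1}^{M+1} ∏_{i=1}^{n} (x_i − 1/2)^2/((M+x_i)! (M+1−x_i)!) · (∏_{1≤i<j≤n} ((x_i − 1/2)^2 − (x_j − 1/2)^2))^2 = n! · 2^{2Mn} · ∏_{j=0}^{n−1} (2j+1)! / (2^{4j+2} (2M−2j)!). -/

import Mathlib

/-
Write `y = (x - 1/2)²`. The summand is `∏ w(xᵢ)` times the squared Vandermonde determinant of
the `yᵢ`. Replacing the monomials `y^b` in one of the two factors by monic polynomials `ψ_b` and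
expanding both determinants (Andreief's identity) turns the sum into `n!` times the determinant
of the Gram matrix `∑ₓ w(x) y^a ψ_b(y)`. If `ψ_b` is orthogonal to all lower powers of `y`, this
matrix is triangular, and its diagonal entries are the factors of the product on the right.

Such `ψ_b` come from the Krawtchouk polynomials `K_m` with `p = 1/2` and `N = 2M+1`, centred at
`N/2`: `K_{2b+1}` is odd in `s = k - N/2`, so `s ψ_b(s²)` can be taken proportional to
`K_{2b+1}(s)`, and the weight `w` on `{1, …, M+1}` is the binomial weight `1/(k!(N-k)!)` on
`{0, …, N}` folded along `s ↦ -s`. Orthogonality of `K_m` comes from its explicit form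
`∑ⱼ (-1)ʲ C(m,j) (k)ⱼ (N-k)ₘ₋ⱼ`: each term shifts the binomial weight of `N` to that of `N - m`,
so pairing `K_m` with a polynomial `p` produces the `m`-th forward difference of `p`.
-/

open Finset Polynomial Nat Matrix

theorem sum_prod_mul_det_mul_det {R α ι : Type*} [CommRing R] [Fintype α] [Fintype ι]
    [DecidableEq ι] (w : α → R) (f g : ι → α → R) :
    ∑ x : ι → α, (∏ i, w (x i)) *
        ((of fun i a => f a (x i)).det * (of fun i b => g b (x i)).det) =
      (Fintype.card ι)! * (of fun a b => ∑ t, w t * f a t * g b t).det := by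
  set G : Matrix ι ι R := of fun a b => ∑ t, w t * f a t * g b t
  have hdet : ∀ (h : ι → α → R) (x : ι → α),
      (of fun i a => h a (x i)).det = ∑ σ : Equiv.Perm ι, (σ.sign : R) * ∏ i, h (σ i) (x i) := by
    intro h x
    rw [← det_transpose, det_apply]
    simp [Units.smul_def]
  have hrow : ∀ σ : Equiv.Perm ι,
      ∑ τ : Equiv.Perm ι, (τ.sign : R) * ∏ i, G (σ i) (τ i) = σ.sign * G.det := by
    intro σ
    rw [← det_permute, ← det_transpose, det_apply]
    simp [Units.smul_def]
  have hexpand : ∀ x : ι → α, (∏ i, w (x i)) *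
      ((of fun i a => f a (x i)).det * (of fun i b => g b (x i)).det) =
      ∑ σ : Equiv.Perm ι, ∑ τ : Equiv.Perm ι, (σ.sign : R) * τ.sign *
        ∏ i, (w (x i) * f (σ i) (x i) * g (τ i) (x i)) := by
    intro x
    rw [hdet, hdet, sum_mul_sum, mul_sum]
    refine sum_congr rfl fun σ _ => ?_
    rw [mul_sum]
    refine sum_congr rfl fun τ _ => ?_
    simp only [prod_mul_distrib]
    ring
  calc ∑ x : ι → α, (∏ i, w (x i)) *
        ((of fun i a => f a (x i)).det * (of fun i b => g b (x i)).det)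
      = ∑ σ : Equiv.Perm ι, (σ.sign : R) * ∑ τ : Equiv.Perm ι, (τ.sign : R) *
          ∏ i, G (σ i) (τ i) := by
        simp only [hexpand, G, of_apply, Fintype.prod_sum, mul_sum, mul_assoc]
        rw [sum_comm]
        exact sum_congr rfl fun σ _ => sum_comm
    _ = (Fintype.card ι)! * G.det := by
        simp only [hrow, ← mul_assoc, ← Units.val_mul, ← Int.cast_mul, Int.units_mul_self]
        simp [Fintype.card_perm]

theorem prod_prod_ite_lt_sub_sq {R : Type*} [CommRing R] {n : ℕ} (v : Fin n → R) :
    (∏ i, ∏ j, if i < j then v i - v j else 1) ^ 2 = (vandermonde v).det ^ 2 := by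
  rw [det_vandermonde, ← prod_pow, ← prod_pow]
  refine prod_congr rfl fun i _ => ?_
  rw [← prod_filter, ← prod_pow, ← prod_pow]
  refine prod_congr (by ext j; simp) fun j _ => ?_
  ring

theorem sum_prod_mul_sq_prod_prod_ite_lt_sub {R α : Type*} [CommRing R] [Fintype α] {n : ℕ}
    (w y : α → R) (p : Fin n → R[X]) (h : Fin n → R) (hdeg : ∀ b, (p b).natDegree = b)
    (hmonic : ∀ b, (p b).Monic)
    (horth : ∀ a b : Fin n, a ≤ b →
      ∑ t, w t * y t ^ (a : ℕ) * (p b).eval (y t) = if a = b then h b else 0) :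
    ∑ x : Fin n → α, (∏ i, w (x i)) * (∏ i, ∏ j, if i < j then y (x i) - y (x j) else 1) ^ 2 =
      n ! * ∏ b, h b := by
  have hdet : ∀ x : Fin n → α, (∏ i, ∏ j, if i < j then y (x i) - y (x j) else 1) ^ 2 =
      (of fun i (a : Fin n) => y (x i) ^ (a : ℕ)).det *
        (of fun i (b : Fin n) => (p b).eval (y (x i))).det := by
    intro x
    rw [prod_prod_ite_lt_sub_sq, sq]
    congr 1
    exact det_eval_matrixOfPolynomials_eq_det_vandermonde _ p hdeg hmonic
  simp only [hdet]
  rw [sum_prod_mul_det_mul_det w (fun (a : Fin n) t => y t ^ (a : ℕ))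
    (fun b t => (p b).eval (y t)), Fintype.card_fin, det_of_isLowerTriangular]
  · simp only [of_apply, horth _ _ le_rfl, if_true]
  · intro a b (hab : a < b)
    rw [of_apply, horth a b hab.le, if_neg hab.ne]

theorem neg_one_pow_eq_mul_neg_one_pow_sub {R : Type*} [Monoid R] [HasDistribNeg R] {j m : ℕ}
    (hjm : j ≤ m) : ((-1) ^ j : R) = (-1) ^ m * (-1) ^ (m - j) := by
  rw [← pow_add, show m + (m - j) = 2 * (m - j) + j by omega, pow_add, pow_mul, neg_one_sq,
    one_pow, one_mul]

section ForwardDifference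

variable {R : Type*} [CommRing R]

theorem sum_neg_one_pow_mul_choose_mul_eq_fwdDiff_iter (f : R → R) (m : ℕ) (y : R) :
    ∑ j ∈ range (m + 1), (-1) ^ j * m.choose j * f (y + j) =
      (-1) ^ m * (fwdDiff 1)^[m] f y := by
  rw [fwdDiff_iter_eq_sum_shift, mul_sum]
  refine sum_congr rfl fun j hj => ?_
  rw [neg_one_pow_eq_mul_neg_one_pow_sub (Nat.lt_succ_iff.mp (mem_range.mp hj)), zsmul_eq_mul,
    nsmul_eq_mul, mul_one]
  push_cast
  ring

theorem fwdDiff_iter_eval_of_natDegree_le {p : R[X]} {m : ℕ} (hp : p.natDegree ≤ m) (y : R) :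
    (fwdDiff 1)^[m] p.eval y = p.coeff m * m ! := by
  rcases hp.eq_or_lt with rfl | hlt
  · rw [p.fwdDiff_iter_degree_eq_factorial]
    simp
  · simp [fwdDiff_iter_eq_zero_of_degree_lt hlt, coeff_eq_zero_of_natDegree_lt hlt]

end ForwardDifference

section Krawtchouk

variable {R : Type*} [CommRing R]

/-- In the variable `s = k - c` and with `N = 2c`, this is
`∑ⱼ (-1)ʲ C(m,j) (k)ⱼ (N-k)ₘ₋ⱼ = N!/(N-m)! · Kₘ(k; 1/2, N)`, a rescaled Krawtchouk polynomial. -/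
noncomputable def krawtchouk (c : R) (m : ℕ) : R[X] :=
  ∑ j ∈ range (m + 1), C ((-1) ^ j * (m.choose j : R)) *
    ((descPochhammer R j).comp (X + C c) * (descPochhammer R (m - j)).comp (C c - X))

theorem krawtchouk_comp_neg_X (c : R) (m : ℕ) :
    (krawtchouk c m).comp (-X) = (-1) ^ m * krawtchouk c m := by
  have hX : (X + C c : R[X]).comp (-X) = C c - X := by simp; ring
  have hX' : (C c - X : R[X]).comp (-X) = X + C c := by simp; ring
  conv_rhs => rw [krawtchouk, ← sum_range_reflect]
  rw [krawtchouk, Polynomial.sum_comp, mul_sum]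
  refine sum_congr rfl fun j hj => ?_
  have hjm : j ≤ m := Nat.lt_succ_iff.mp (mem_range.mp hj)
  rw [add_tsub_cancel_right, Nat.sub_sub_self hjm, Nat.choose_symm hjm]
  simp only [mul_comp, C_comp, comp_assoc, hX, hX']
  rw [neg_one_pow_eq_mul_neg_one_pow_sub hjm]
  simp only [map_mul, map_pow, map_neg, map_one]
  ring

theorem natDegree_C_sub_X [Nontrivial R] (c : R) : (C c - X).natDegree = 1 := by
  rw [← neg_sub, natDegree_neg, natDegree_X_sub_C]

theorem leadingCoeff_C_sub_X [Nontrivial R] (c : R) : (C c - X).leadingCoeff = -1 := by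
  rw [← neg_sub, leadingCoeff_neg, leadingCoeff_X_sub_C]

variable [IsDomain R]

theorem natDegree_descPochhammer_comp {q : R[X]} (hq : q.natDegree = 1) (j : ℕ) :
    ((descPochhammer R j).comp q).natDegree = j := by
  rw [natDegree_comp, hq, descPochhammer_natDegree, mul_one]

theorem coeff_descPochhammer_comp {q : R[X]} (hq : q.natDegree = 1) (j : ℕ) :
    ((descPochhammer R j).comp q).coeff j = q.leadingCoeff ^ j := by
  have h := coeff_comp_degree_mul_degree (p := descPochhammer R j) (hq ▸ one_ne_zero)
  rwa [hq, descPochhammer_natDegree, mul_one, (monic_descPochhammer R j).leadingCoeff,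
    one_mul] at h

theorem natDegree_krawtchouk_le (c : R) (m : ℕ) : (krawtchouk c m).natDegree ≤ m := by
  refine natDegree_sum_le_of_forall_le _ _ fun j hj => (natDegree_C_mul_le _ _).trans ?_
  refine natDegree_mul_le.trans ?_
  rw [natDegree_descPochhammer_comp (natDegree_X_add_C c),
    natDegree_descPochhammer_comp (natDegree_C_sub_X c)]
  have := mem_range.mp hj
  omega

theorem coeff_krawtchouk (c : R) (m : ℕ) : (krawtchouk c m).coeff m = (-2) ^ m := by
  have hterm : ∀ j d, ((descPochhammer R j).comp (X + C c) *
      (descPochhammer R d).comp (C c - X)).coeff (j + d) = (-1) ^ d := by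
    intro j d
    rw [coeff_mul_add_eq_of_natDegree_le
      (natDegree_descPochhammer_comp (natDegree_X_add_C c) j).le
      (natDegree_descPochhammer_comp (natDegree_C_sub_X c) _).le,
      coeff_descPochhammer_comp (natDegree_X_add_C c),
      coeff_descPochhammer_comp (natDegree_C_sub_X c), leadingCoeff_X_add_C, leadingCoeff_C_sub_X,
      one_pow, one_mul]
  calc (krawtchouk c m).coeff m
      = ∑ j ∈ range (m + 1), (-1) ^ j * (m.choose j : R) * (-1) ^ (m - j) := by
        rw [krawtchouk, finsetSum_coeff]
        refine sum_congr rfl fun j hj => ?_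
        rw [coeff_C_mul, ← hterm j (m - j),
          Nat.add_sub_cancel' (Nat.lt_succ_iff.mp (mem_range.mp hj))]
    _ = ∑ j ∈ range (m + 1), (-1) ^ m * (m.choose j : R) := by
        refine sum_congr rfl fun j hj => ?_
        rw [mul_right_comm, ← pow_add, Nat.add_sub_cancel' (Nat.lt_succ_iff.mp (mem_range.mp hj))]
    _ = (-2) ^ m := by
        rw [← mul_sum, ← Nat.cast_sum, Nat.sum_range_choose, neg_pow (2 : R)]
        push_cast; ring

end Krawtchouk

section OddPolynomial

variable {R : Type*} [CommRing R] [NoZeroDivisors R] [CharZero R] {p : R[X]}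

theorem coeff_eq_zero_of_comp_neg_X (hp : p.comp (-X) = -p) {n : ℕ} (hn : Even n) :
    p.coeff n = 0 := by
  have h := congrArg (coeff · n) hp
  simp only [show (-X : R[X]) = C (-1) * X by simp, comp_C_mul_X_coeff, hn.neg_one_pow, mul_one,
    coeff_neg] at h
  exact self_eq_neg.mp h

theorem X_mul_expand_contract_divX (hp : p.comp (-X) = -p) :
    X * expand R 2 (contract 2 p.divX) = p := by
  ext (_ | n)
  · rw [coeff_X_mul_zero, coeff_eq_zero_of_comp_neg_X hp .zero]
  · rw [coeff_X_mul, coeff_expand two_pos, coeff_contract two_ne_zero, coeff_divX]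
    split_ifs with h
    · rw [Nat.div_mul_cancel h]
    · refine (coeff_eq_zero_of_comp_neg_X hp ?_).symm
      rwa [Nat.even_add_one, even_iff_two_dvd]

end OddPolynomial

section TypeB

variable {K : Type*} [Field K]

/-- The monic `ψ` of degree `b` with `s ψ(s²) = krawtchouk c (2b+1) s / (-2)^(2b+1)`; it exists
because that Krawtchouk polynomial is odd. -/
noncomputable def typeBKrawtchouk (c : K) (b : ℕ) : K[X] :=
  C ((-2) ^ (2 * b + 1))⁻¹ * contract 2 (krawtchouk c (2 * b + 1)).divX

theorem coeff_typeBKrawtchouk (c : K) (b i : ℕ) :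
    (typeBKrawtchouk c b).coeff i =
      ((-2) ^ (2 * b + 1))⁻¹ * (krawtchouk c (2 * b + 1)).coeff (2 * i + 1) := by
  rw [typeBKrawtchouk, coeff_C_mul, coeff_contract two_ne_zero, coeff_divX, mul_comm i]

variable [CharZero K]

theorem eval_typeBKrawtchouk (c s : K) (b : ℕ) :
    s * (typeBKrawtchouk c b).eval (s ^ 2) =
      ((-2) ^ (2 * b + 1))⁻¹ * (krawtchouk c (2 * b + 1)).eval s := by
  have hodd : (krawtchouk c (2 * b + 1)).comp (-X) = -krawtchouk c (2 * b + 1) := by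
    rw [krawtchouk_comp_neg_X, (odd_two_mul_add_one b).neg_one_pow, neg_one_mul]
  conv_rhs => rw [← X_mul_expand_contract_divX hodd]
  rw [typeBKrawtchouk, eval_mul, eval_mul, eval_C, eval_X, expand_eval]
  ring

theorem natDegree_typeBKrawtchouk (c : K) (b : ℕ) : (typeBKrawtchouk c b).natDegree = b := by
  refine natDegree_eq_of_le_of_coeff_ne_zero (natDegree_le_iff_coeff_eq_zero.mpr fun i hi => ?_) ?_
  · rw [coeff_typeBKrawtchouk, coeff_eq_zero_of_natDegree_lt
      ((natDegree_krawtchouk_le c _).trans_lt (by omega)), mul_zero]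
  · rw [coeff_typeBKrawtchouk, coeff_krawtchouk]
    exact mul_ne_zero (inv_ne_zero (pow_ne_zero _ (by norm_num))) (pow_ne_zero _ (by norm_num))

theorem monic_typeBKrawtchouk (c : K) (b : ℕ) : (typeBKrawtchouk c b).Monic := by
  rw [Monic, leadingCoeff, natDegree_typeBKrawtchouk, coeff_typeBKrawtchouk, coeff_krawtchouk,
    inv_mul_cancel₀ (pow_ne_zero _ (by norm_num))]

end TypeB

/-- `1/(k!(N-k)!)`; meaningful only for `k ≤ N`, because of the truncated subtraction. -/
noncomputable def binomWeight (N k : ℕ) : ℝ := ((k ! * (N - k)! : ℕ) : ℝ)⁻¹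

theorem binomWeight_eq_choose_div {N k : ℕ} (hk : k ≤ N) :
    binomWeight N k = N.choose k / N ! := by
  rw [binomWeight, ← choose_mul_factorial_mul_factorial hk]
  push_cast
  have : (N.choose k : ℝ) ≠ 0 := by exact_mod_cast (choose_pos hk).ne'
  field_simp

theorem binomWeight_sub {N k : ℕ} (hk : k ≤ N) : binomWeight N (N - k) = binomWeight N k := by
  rw [binomWeight, binomWeight, Nat.sub_sub_self hk, mul_comm]

theorem sum_binomWeight (N : ℕ) : ∑ k ∈ range (N + 1), binomWeight N k = 2 ^ N / N ! := by
  rw [sum_congr rfl fun k hk => binomWeight_eq_choose_div (Nat.lt_succ_iff.mp (mem_range.mp hk)),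
    ← sum_div, ← Nat.cast_sum, sum_range_choose]
  push_cast; rfl

theorem descFactorial_mul_descFactorial_mul_binomWeight {N m i j : ℕ} (hj : j ≤ m)
    (hi : i + m ≤ N) :
    ((i + j).descFactorial j * (N - (i + j)).descFactorial (m - j) : ℝ) * binomWeight N (i + j) =
      binomWeight (N - m) i := by
  have h₁ := factorial_mul_descFactorial (n := i + j) (k := j) (by omega)
  have h₂ := factorial_mul_descFactorial (n := N - (i + j)) (k := m - j) (by omega)
  rw [Nat.add_sub_cancel] at h₁
  rw [show N - (i + j) - (m - j) = N - m - i by omega] at h₂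
  rw [binomWeight, binomWeight, ← h₁, ← h₂]
  push_cast
  have : (i ! : ℝ) * (N - m - i)! ≠ 0 := by positivity
  have : ((i + j).descFactorial j : ℝ) ≠ 0 := by
    exact_mod_cast (Nat.descFactorial_pos.mpr (by omega)).ne'
  have : ((N - (i + j)).descFactorial (m - j) : ℝ) ≠ 0 := by
    exact_mod_cast (Nat.descFactorial_pos.mpr (by omega)).ne'
  field_simp

theorem sum_mul_descFactorial_mul_binomWeight {N m j : ℕ} (hj : j ≤ m) (hm : m ≤ N)
    (F : ℕ → ℝ) :
    ∑ k ∈ range (N + 1),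
        F k * (k.descFactorial j * (N - k).descFactorial (m - j) : ℝ) * binomWeight N k =
      ∑ i ∈ range (N - m + 1), F (i + j) * binomWeight (N - m) i := by
  set G : ℕ → ℝ := fun k =>
    F k * (k.descFactorial j * (N - k).descFactorial (m - j) : ℝ) * binomWeight N k
  have hshift : ∀ i ∈ range (N - m + 1), F (i + j) * binomWeight (N - m) i = G (j + i) := by
    intro i hi
    rw [add_comm j, ← descFactorial_mul_descFactorial_mul_binomWeight hj
      (by have := mem_range.mp hi; omega)]
    simp only [G, mul_assoc]
  have hvanish : ∀ k ∈ range (N + 1), k ∉ Ico j (j + (N - m + 1)) → G k = 0 := by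
    intro k hk hk'
    simp only [mem_Ico, not_and_or, not_le, not_lt] at hk'
    have hk := mem_range.mp hk
    suffices k.descFactorial j * (N - k).descFactorial (m - j) = 0 by
      simp only [G]; rw [← Nat.cast_mul, this, Nat.cast_zero, mul_zero, zero_mul]
    rcases hk' with h | h
    · rw [descFactorial_eq_zero_iff_lt.mpr h, zero_mul]
    · rw [descFactorial_eq_zero_iff_lt.mpr (by omega : N - k < m - j), mul_zero]
  have hIco := sum_Ico_eq_sum_range G j (j + (N - m + 1))
  rw [Nat.add_sub_cancel_left] at hIco
  rw [sum_congr rfl hshift, ← hIco]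
  exact (sum_subset (fun k hk => by simp only [mem_Ico, mem_range] at hk ⊢; omega) hvanish).symm

theorem eval_krawtchouk_sub_half {N k : ℕ} (hk : k ≤ N) (m : ℕ) :
    (krawtchouk ((N : ℝ) / 2) m).eval ((k : ℝ) - N / 2) =
      ∑ j ∈ range (m + 1),
        (-1) ^ j * m.choose j * (k.descFactorial j * (N - k).descFactorial (m - j) : ℝ) := by
  have h₁ : (k : ℝ) - N / 2 + N / 2 = k := by ring
  have h₂ : (N : ℝ) / 2 - ((k : ℝ) - N / 2) = ((N - k : ℕ) : ℝ) := by push_cast [hk]; ring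
  simp only [krawtchouk, eval_finsetSum, eval_mul, eval_C, eval_comp, eval_add, eval_sub, eval_X,
    h₁, h₂, descPochhammer_eval_eq_descFactorial]

theorem sum_eval_mul_eval_krawtchouk_mul_binomWeight {N m : ℕ} (hm : m ≤ N) {p : ℝ[X]}
    (hp : p.natDegree ≤ m) :
    ∑ k ∈ range (N + 1),
        p.eval (k : ℝ) * (krawtchouk ((N : ℝ) / 2) m).eval ((k : ℝ) - N / 2) * binomWeight N k =
      (-1) ^ m * m ! * p.coeff m * 2 ^ (N - m) / (N - m)! := by
  calc ∑ k ∈ range (N + 1),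
        p.eval (k : ℝ) * (krawtchouk ((N : ℝ) / 2) m).eval ((k : ℝ) - N / 2) * binomWeight N k
      = ∑ j ∈ range (m + 1), (-1) ^ j * m.choose j * ∑ k ∈ range (N + 1), p.eval (k : ℝ) *
          (k.descFactorial j * (N - k).descFactorial (m - j) : ℝ) * binomWeight N k := by
        simp only [mul_sum]
        rw [sum_comm]
        refine sum_congr rfl fun k hk => ?_
        rw [eval_krawtchouk_sub_half (Nat.lt_succ_iff.mp (mem_range.mp hk)), mul_sum, sum_mul]
        exact sum_congr rfl fun j _ => by ring
    _ = ∑ j ∈ range (m + 1), (-1) ^ j * m.choose j *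
          ∑ i ∈ range (N - m + 1), p.eval ((i + j : ℕ) : ℝ) * binomWeight (N - m) i :=
        sum_congr rfl fun j hj => by
          rw [sum_mul_descFactorial_mul_binomWeight (Nat.lt_succ_iff.mp (mem_range.mp hj)) hm]
    _ = ∑ i ∈ range (N - m + 1), binomWeight (N - m) i *
          ∑ j ∈ range (m + 1), (-1) ^ j * m.choose j * p.eval ((i : ℝ) + j) := by
        simp only [mul_sum]
        rw [sum_comm]
        refine sum_congr rfl fun i _ => sum_congr rfl fun j _ => ?_
        push_cast
        ring
    _ = (-1) ^ m * m ! * p.coeff m * 2 ^ (N - m) / (N - m)! := by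
        simp only [sum_neg_one_pow_mul_choose_mul_eq_fwdDiff_iter (eval · p),
          fwdDiff_iter_eval_of_natDegree_le hp]
        rw [← sum_mul, sum_binomWeight]
        ring

theorem sum_pow_mul_eval_krawtchouk_mul_binomWeight {N m d : ℕ} (hm : m ≤ N) (hd : d ≤ m) :
    ∑ k ∈ range (N + 1),
        ((k : ℝ) - N / 2) ^ d * (krawtchouk ((N : ℝ) / 2) m).eval ((k : ℝ) - N / 2) *
          binomWeight N k =
      if d = m then ((-1) ^ m * m ! * 2 ^ (N - m) / (N - m)! : ℝ) else 0 := by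
  have hdeg : ((X - C ((N : ℝ) / 2)) ^ d).natDegree = d := by
    rw [natDegree_pow, natDegree_X_sub_C, mul_one]
  have hcoeff : ((X - C ((N : ℝ) / 2)) ^ d).coeff d = 1 := by
    simpa [hdeg] using ((monic_X_sub_C ((N : ℝ) / 2)).pow d).coeff_natDegree
  have h := sum_eval_mul_eval_krawtchouk_mul_binomWeight hm (hdeg.trans_le hd)
  simp only [eval_pow, eval_sub, eval_X, eval_C] at h
  rw [h]
  split_ifs with hdm
  · subst hdm
    rw [hcoeff, mul_one]
  · rw [coeff_eq_zero_of_natDegree_lt (by omega), mul_zero, zero_mul, zero_div]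

theorem sum_range_eq_two_nsmul_sum_Icc {A : Type*} [AddCommMonoid A] {M : ℕ} (F : ℕ → A)
    (hF : ∀ k ≤ 2 * M + 1, F (2 * M + 1 - k) = F k) :
    ∑ k ∈ range (2 * M + 2), F k = 2 • ∑ x ∈ Icc 1 (M + 1), F (M + x) := by
  have hlow : ∑ k ∈ range (M + 1), F k = ∑ k ∈ range (M + 1), F (M + 1 + k) := by
    rw [← sum_range_reflect]
    refine sum_congr rfl fun k hk => ?_
    have hk := mem_range.mp hk
    rw [← hF _ (by omega)]
    congr 1
    omega
  have hhigh : ∑ k ∈ range (M + 1), F (M + 1 + k) = ∑ x ∈ Icc 1 (M + 1), F (M + x) := by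
    rw [← Finset.Ico_add_one_right_eq_Icc, sum_Ico_eq_sum_range,
      show M + 1 + 1 - 1 = M + 1 by omega]
    exact sum_congr rfl fun k _ => by rw [add_comm 1 k, ← add_assoc, add_right_comm]
  rw [show 2 * M + 2 = (M + 1) + (M + 1) by ring, sum_range_add, hlow, hhigh, two_nsmul]

theorem sum_Icc_pow_mul_eval_krawtchouk_mul_binomWeight {M a b : ℕ} (hab : a ≤ b) (hbM : b ≤ M) :
    ∑ x ∈ Icc 1 (M + 1),
        ((x : ℝ) - 1 / 2) ^ (2 * a + 1) *
          (krawtchouk (((2 * M + 1 : ℕ) : ℝ) / 2) (2 * b + 1)).eval ((x : ℝ) - 1 / 2) *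
          binomWeight (2 * M + 1) (M + x) =
      if a = b then (-((2 * b + 1)! * 2 ^ (2 * M - 2 * b) / (2 * M - 2 * b)!) / 2 : ℝ)
      else 0 := by
  set N := 2 * M + 1
  set K := krawtchouk ((N : ℝ) / 2) (2 * b + 1)
  set F : ℕ → ℝ := fun k => ((k : ℝ) - N / 2) ^ (2 * a + 1) * K.eval ((k : ℝ) - N / 2) *
    binomWeight N k
  have hshift : ∀ x ∈ Icc 1 (M + 1), ((x : ℝ) - 1 / 2) ^ (2 * a + 1) *
      K.eval ((x : ℝ) - 1 / 2) * binomWeight N (M + x) = F (M + x) := by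
    intro x _
    have hs : ((M + x : ℕ) : ℝ) - N / 2 = x - 1 / 2 := by simp only [N]; push_cast; ring
    simp only [F, hs]
  have hsymm : ∀ k ≤ N, F (N - k) = F k := by
    intro k hk
    have hs : ((N - k : ℕ) : ℝ) - N / 2 = -((k : ℝ) - N / 2) := by push_cast [hk]; ring
    have hK : K.eval (-((k : ℝ) - N / 2)) = -K.eval ((k : ℝ) - N / 2) := by
      have h := congrArg (eval ((k : ℝ) - N / 2)) (krawtchouk_comp_neg_X ((N : ℝ) / 2) (2 * b + 1))
      simpa [eval_comp, (odd_two_mul_add_one b).neg_one_pow] using h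
    simp only [F, hs, hK, binomWeight_sub hk, Odd.neg_pow (odd_two_mul_add_one a)]
    ring
  have hfold := sum_range_eq_two_nsmul_sum_Icc F hsymm
  rw [two_nsmul, ← two_mul, show 2 * M + 2 = N + 1 by omega,
    sum_pow_mul_eval_krawtchouk_mul_binomWeight (by omega) (by omega)] at hfold
  rw [show N - (2 * b + 1) = 2 * M - 2 * b by omega, (odd_two_mul_add_one b).neg_one_pow] at hfold
  rw [sum_congr rfl hshift]
  split_ifs at hfold ⊢ <;> first | omega | linear_combination (-1 / 2 : ℝ) * hfold

theorem sum_weight_mul_pow_mul_eval_typeBKrawtchouk {M a b : ℕ} (hab : a ≤ b) (hbM : b ≤ M) :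
    ∑ x ∈ Icc 1 (M + 1),
        ((x : ℝ) - 1 / 2) ^ 2 / (((M + x)! * (M + 1 - x)! : ℕ) : ℝ) *
          (((x : ℝ) - 1 / 2) ^ 2) ^ a *
          (typeBKrawtchouk (((2 * M + 1 : ℕ) : ℝ) / 2) b).eval (((x : ℝ) - 1 / 2) ^ 2) =
      if a = b then (2 ^ (2 * M) * ((2 * b + 1)! / (2 ^ (4 * b + 2) * (2 * M - 2 * b)!)) : ℝ)
      else 0 := by
  have hterm : ∀ x ∈ Icc 1 (M + 1),
      ((x : ℝ) - 1 / 2) ^ 2 / (((M + x)! * (M + 1 - x)! : ℕ) : ℝ) *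
          (((x : ℝ) - 1 / 2) ^ 2) ^ a *
          (typeBKrawtchouk (((2 * M + 1 : ℕ) : ℝ) / 2) b).eval (((x : ℝ) - 1 / 2) ^ 2) =
        ((-2) ^ (2 * b + 1))⁻¹ * (((x : ℝ) - 1 / 2) ^ (2 * a + 1) *
          (krawtchouk (((2 * M + 1 : ℕ) : ℝ) / 2) (2 * b + 1)).eval ((x : ℝ) - 1 / 2) *
          binomWeight (2 * M + 1) (M + x)) := by
    intro x hx
    have hw : binomWeight (2 * M + 1) (M + x) = ((((M + x)! * (M + 1 - x)! : ℕ) : ℝ))⁻¹ := by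
      rw [binomWeight, show 2 * M + 1 - (M + x) = M + 1 - x by have := mem_Icc.mp hx; omega]
    have key := eval_typeBKrawtchouk (((2 * M + 1 : ℕ) : ℝ) / 2) ((x : ℝ) - 1 / 2) b
    rw [hw]
    generalize (x : ℝ) - 1 / 2 = s at key ⊢
    linear_combination s ^ (2 * a + 1) * ((((M + x)! * (M + 1 - x)! : ℕ) : ℝ))⁻¹ * key
  rw [sum_congr rfl hterm, ← mul_sum, sum_Icc_pow_mul_eval_krawtchouk_mul_binomWeight hab hbM]
  split_ifs with hba
  · subst hba
    obtain ⟨r, rfl⟩ := Nat.exists_eq_add_of_le hbM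
    rw [show 2 * (a + r) - 2 * a = 2 * r by omega, (odd_two_mul_add_one a).neg_pow]
    field_simp
    ring
  · rw [mul_zero]

theorem stmt_17_general (M n : ℕ) (hnM : n ≤ M + 1) :
    ∑ x : Fin n → {t : ℕ // t ∈ Finset.Icc 1 (M + 1)},
      (∏ i : Fin n,
        ((((x i : ℕ) : ℝ) - 1 / 2) ^ 2 /
          ((Nat.factorial (M + (x i : ℕ)) * Nat.factorial (M + 1 - (x i : ℕ)) : ℕ) : ℝ))) *
        (∏ i : Fin n, ∏ j : Fin n, if i < j then
          (((x i : ℕ) : ℝ) - 1 / 2) ^ 2 - (((x j : ℕ) : ℝ) - 1 / 2) ^ 2 else 1) ^ 2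
    = (Nat.factorial n : ℝ) * (2 : ℝ) ^ (2 * M * n) *
        ∏ j ∈ Finset.range n,
          ((Nat.factorial (2 * j + 1) : ℝ) /
            ((2 : ℝ) ^ (4 * j + 2) * (Nat.factorial (2 * M - 2 * j) : ℝ))) := by
  rw [sum_prod_mul_sq_prod_prod_ite_lt_sub
    (fun t : {t : ℕ // t ∈ Icc 1 (M + 1)} =>
      (((t : ℕ) : ℝ) - 1 / 2) ^ 2 / (((M + t)! * (M + 1 - t)! : ℕ) : ℝ))
    (fun t => (((t : ℕ) : ℝ) - 1 / 2) ^ 2)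
    (fun b => typeBKrawtchouk (((2 * M + 1 : ℕ) : ℝ) / 2) b)
    (fun b => 2 ^ (2 * M) * ((2 * (b : ℕ) + 1)! / (2 ^ (4 * (b : ℕ) + 2) * (2 * M - 2 * (b : ℕ))!)))
    (fun b => natDegree_typeBKrawtchouk _ _) (fun b => monic_typeBKrawtchouk _ _)]
  · rw [prod_mul_distrib, prod_const, Finset.card_univ, Fintype.card_fin, ← pow_mul,
      Fin.prod_univ_eq_prod_range
        (fun j => ((2 * j + 1)! : ℝ) / (2 ^ (4 * j + 2) * (2 * M - 2 * j)!)) n]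
    ring
  · intro a b hab
    exact (sum_coe_sort _ _).trans
      ((sum_weight_mul_pow_mul_eval_typeBKrawtchouk hab (by omega)).trans (by simp [Fin.val_inj]))

/-- For integers `M ≥ 0` and `1 ≤ n ≤ M+1`:
`∑_{x₁,…,x_n=1}^{M+1} ∏ᵢ (xᵢ-1/2)²/((M+xᵢ)!(M+1-xᵢ)!) ⬝
  (∏_{i<j}((xᵢ-1/2)² - (xⱼ-1/2)²))²
  = n! ⬝ 2^{2Mn} ⬝ ∏_{j=0}^{n-1} (2j+1)!/(2^{4j+2}(2M-2j)!)`. -/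
theorem stmt_17 (M n : ℕ) (hn : 1 ≤ n) (hnM : n ≤ M + 1) :
    ∑ x : Fin n → {t : ℕ // t ∈ Finset.Icc 1 (M + 1)},
      (∏ i : Fin n,
        ((((x i : ℕ) : ℝ) - 1 / 2) ^ 2 /
          ((Nat.factorial (M + (x i : ℕ)) * Nat.factorial (M + 1 - (x i : ℕ)) : ℕ) : ℝ))) *
        (∏ i : Fin n, ∏ j : Fin n, if i < j then
          (((x i : ℕ) : ℝ) - 1 / 2) ^ 2 - (((x j : ℕ) : ℝ) - 1 / 2) ^ 2 else 1) ^ 2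
    = (Nat.factorial n : ℝ) * (2 : ℝ) ^ (2 * M * n) *
        ∏ j ∈ Finset.range n,
          ((Nat.factorial (2 * j + 1) : ℝ) /
            ((2 : ℝ) ^ (4 * j + 2) * (Nat.factorial (2 * M - 2 * j) : ℝ))) :=
  stmt_17_general M n hnM
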